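/- arXiv:1711.06670 — 3 statements merged into one kernel-verified Lean document; each statement's English description precedes it below -/
import Mathlib

section
/- Let Q be a finite quiver with adjacency matrix A(Q), whose (i,j)-entry is the number of arrows from vertex v_i to vertex v_j, and let fpdim(Q) denote the spectral radius ρ(A(Q)). An oriented cycle based at a vertex v_i is called indecomposable if it is not a concatenation of two oriented cycles based at v_i; let θ_i be the number of indecomposable oriented cycles based at v_i, and let the cycle number be Θ(Q) = max_i θ_i. Then: (1) fpdim(Q) = 0 if and only if Θ(Q) = 0 (i.e., Q has no oriented cycles); (2) fpdim(Q) = 1 if and only if Θ(Q) = 1; (3) fpdim(Q) > 1 if and only if Θ(Q) ≥ 2. -/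
open scoped Classical

noncomputable section

/-- The spectral radius of a complex square matrix: the supremum of the moduli of its
eigenvalues (elements of its spectrum). -/
def specRad {ι : Type*} [Fintype ι] [DecidableEq ι] (M : Matrix ι ι ℂ) : ℝ :=
  sSup ((fun z : ℂ => ‖z‖) '' spectrum ℂ M)

variable (V : Type) [Quiver.{1} V] [Fintype V] [DecidableEq V] [∀ a b : V, Fintype (a ⟶ b)]

/-- The adjacency matrix of a finite quiver: the `(i,j)` entry is the number of arrows
from the vertex `i` to the vertex `j`. -/
def quivAdj : Matrix V V ℂ := fun a b => (Fintype.card (a ⟶ b) : ℂ)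

/-- The Frobenius-Perron dimension of a finite quiver: the spectral radius of its
adjacency matrix. -/
def fpdimQuiver : ℝ := specRad (quivAdj V)

/-- An indecomposable oriented cycle based at the vertex `a`: an oriented cycle
(a path of positive length from `a` to `a`) that is not the concatenation of two
oriented cycles based at `a`. -/
def IsIndecCycle {a : V} (p : Quiver.Path a a) : Prop :=
  0 < p.length ∧
    ¬ ∃ (q r : Quiver.Path a a), 0 < q.length ∧ 0 < r.length ∧ p = q.comp r

/-- The number of indecomposable oriented cycles based at the vertex `a`. -/
def theta (a : V) : ℕ∞ := {p : Quiver.Path a a | IsIndecCycle V p}.encard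

/-- The cycle number of a quiver: `Θ(Q) = max_a θ_a`. -/
def cycleNumber : ℕ∞ := ⨆ a : V, theta V a

/-! The number of closed paths of length `n` is `tr Aⁿ = ∑ m_μ μⁿ`, summed over the eigenvalues
`μ` of `A = A(Q)` with their algebraic multiplicities `m_μ ≥ 1`. Hence it is at most `N ρⁿ` for
`N` vertices; conversely, by Lagrange interpolation each `m_μ μⁿ` is a fixed linear combination
of finitely many consecutive traces, so bounded traces force `ρ ≤ 1` and vanishing ones `ρ = 0`.

Every oriented cycle ends with an indecomposable one. So without indecomposable cycles there are
no cycles, and with at most one at each vertex there is at most one closed path of each length at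
each vertex. Two distinct indecomposable cycles `c, c'` at a vertex give two distinct closed paths
of a common length `L` (`c, c'` or `cc', c'c`), and their `2ᵏ` products of `k` factors are
distinct closed paths of length `kL`, whence `ρ ^ L ≥ 2`. -/

open Polynomial in
lemma sum_mul_pow_mul_eval {𝕜 : Type*} [Field 𝕜] (s : Finset 𝕜) (c : 𝕜 → 𝕜) (P : 𝕜[X])
    (n : ℕ) : ∑ μ ∈ s, c μ * μ ^ n * P.eval μ =
      ∑ j ∈ Finset.range (P.natDegree + 1), P.coeff j * ∑ μ ∈ s, c μ * μ ^ (n + j) := by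
  simp_rw [eval_eq_sum_range, Finset.mul_sum, Finset.sum_comm (γ := ℕ), pow_add]
  refine Finset.sum_congr rfl fun j _ => Finset.sum_congr rfl fun μ _ => ?_
  ring

lemma exists_norm_mul_pow_le_of_norm_sum_le {𝕜 : Type*} [NormedField 𝕜] {s : Finset 𝕜}
    {μ₀ : 𝕜} (hμ₀ : μ₀ ∈ s) (c : 𝕜 → 𝕜) {C : ℝ}
    (h : ∀ n, 1 ≤ n → ‖∑ μ ∈ s, c μ * μ ^ n‖ ≤ C) :
    ∃ K, ∀ n, 1 ≤ n → ‖c μ₀ * μ₀ ^ n‖ ≤ K * C := by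
  set P := Lagrange.basis s id μ₀
  refine ⟨∑ j ∈ Finset.range (P.natDegree + 1), ‖P.coeff j‖, fun n hn => ?_⟩
  have hP : ∑ μ ∈ s, c μ * μ ^ n * P.eval μ = c μ₀ * μ₀ ^ n := by
    rw [Finset.sum_eq_single_of_mem μ₀ hμ₀ fun μ hμ hne => by
      rw [show P.eval μ = 0 from Lagrange.eval_basis_of_ne (v := id) hne.symm hμ, mul_zero]]
    rw [show P.eval μ₀ = 1 from Lagrange.eval_basis_self (v := id) (Set.injOn_id _) hμ₀, mul_one]
  rw [← hP, sum_mul_pow_mul_eval, Finset.sum_mul]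
  refine (norm_sum_le _ _).trans (Finset.sum_le_sum fun j _ => ?_)
  rw [norm_mul]
  exact mul_le_mul_of_nonneg_left (h _ (by omega)) (norm_nonneg _)

lemma le_of_eventually_pow_le_mul_pow {a r N : ℝ} (hr : 0 ≤ r)
    (h : ∀ᶠ k in Filter.atTop, a ^ k ≤ N * r ^ k) : a ≤ r := by
  by_contra! hra
  have ha : 0 < a := hr.trans_lt hra
  have hlim : Filter.Tendsto (fun k : ℕ => N * (r / a) ^ k) Filter.atTop (nhds 0) := by
    simpa using (tendsto_pow_atTop_nhds_zero_of_lt_one (div_nonneg hr ha.le)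
      ((div_lt_one ha).mpr hra)).const_mul N
  obtain ⟨k, hk, hlt⟩ := (h.and (hlim.eventually (gt_mem_nhds one_pos))).exists
  rw [div_pow, ← mul_div_assoc, div_lt_one (pow_pos ha k)] at hlt
  exact hlt.not_ge hk

namespace Module.End

open LinearMap Module

variable {K E : Type*} [Field K] [AddCommGroup E] [Module K E] [FiniteDimensional K E]

lemma trace_restrict_maxGenEigenspace_pow (f : End K E) (μ : K) (n : ℕ) :
    trace K _ ((f.restrict (mapsTo_maxGenEigenspace_of_comm (Commute.refl f) μ)) ^ n) =
      finrank K (f.maxGenEigenspace μ) • μ ^ n := by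
  set g := f.restrict (mapsTo_maxGenEigenspace_of_comm (Commute.refl f) μ)
  set a := algebraMap K (End K (f.maxGenEigenspace μ)) μ
  have hcomm : Commute g a := (Algebra.commutes μ g).symm
  -- `g ^ n - a ^ n` is a multiple of the nilpotent `g - a` by an element commuting with it
  have hnil : IsNilpotent (g ^ n - a ^ n) := by
    rw [← hcomm.geom_sum₂_mul]
    refine Commute.isNilpotent_mul_left ?_
      (isNilpotent_restrict_maxGenEigenspace_sub_algebraMap f μ)
    refine Commute.sum_left _ _ _ fun i _ => Commute.mul_left ?_ ?_
    · exact ((Commute.refl g).pow_left i).sub_right (hcomm.pow_left i)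
    · exact (hcomm.symm.pow_left _).sub_right ((Commute.refl a).pow_left _)
  have := (isNilpotent_trace_of_isNilpotent hnil).eq_zero
  rwa [map_sub, sub_eq_zero, ← map_pow, Module.algebraMap_end_eq_smul_id, map_smul, trace_id,
    smul_eq_mul, mul_comm, ← nsmul_eq_mul] at this

lemma maxGenEigenspace_ne_bot_iff {f : End K E} {μ : K} :
    f.maxGenEigenspace μ ≠ ⊥ ↔ μ ∈ spectrum K f := by
  rw [← hasUnifEigenvalue_iff_mem_spectrum, ← hasUnifEigenvalue_iff_hasUnifEigenvalue_one
    ENat.top_pos]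
  rfl

lemma trace_pow_eq_sum_spectrum [IsAlgClosed K] (f : End K E) (n : ℕ) :
    trace K E (f ^ n) =
      ∑ μ ∈ f.finite_spectrum.toFinset, finrank K (f.maxGenEigenspace μ) • μ ^ n := by
  have hint : DirectSum.IsInternal f.maxGenEigenspace :=
    DirectSum.isInternal_submodule_of_iSupIndep_of_iSup_eq_top
      f.independent_maxGenEigenspace f.iSup_maxGenEigenspace_eq_top
  have hne : {μ | f.maxGenEigenspace μ ≠ ⊥} = spectrum K f :=
    Set.ext fun μ => maxGenEigenspace_ne_bot_iff
  rw [trace_eq_sum_trace_restrict' hint (hne ▸ f.finite_spectrum)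
    (fun μ => mapsTo_maxGenEigenspace_of_comm ((Commute.refl f).pow_right n) μ)]
  refine Finset.sum_congr (by ext; simp [hne]) fun μ _ => ?_
  rw [← trace_restrict_maxGenEigenspace_pow]
  exact congrArg _ (pow_restrict n _).symm

lemma finrank_maxGenEigenspace_pos {f : End K E} {μ : K} (hμ : μ ∈ spectrum K f) :
    0 < finrank K (f.maxGenEigenspace μ) :=
  Submodule.one_le_finrank_iff.mpr (maxGenEigenspace_ne_bot_iff.mpr hμ)

end Module.End

lemma Matrix.exists_trace_pow_eq_sum_spectrum {ι K : Type*} [Fintype ι] [DecidableEq ι] [Field K]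
    [IsAlgClosed K] (M : Matrix ι ι K) :
    ∃ m : K → ℕ, (∀ μ ∈ spectrum K M, 0 < m μ) ∧
      ∀ n, (M ^ n).trace = ∑ μ ∈ M.finite_spectrum.toFinset, m μ • μ ^ n := by
  refine ⟨fun μ => Module.finrank K (Module.End.maxGenEigenspace (toLin' M) μ), fun μ hμ =>
    Module.End.finrank_maxGenEigenspace_pos (by rwa [spectrum_toLin']), fun n => ?_⟩
  rw [← trace_toLin'_eq, toLin'_pow, Module.End.trace_pow_eq_sum_spectrum]
  exact Finset.sum_congr (by ext; simp) fun _ _ => rfl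

section SpecRad

variable {ι : Type*} [Fintype ι] [DecidableEq ι] (M : Matrix ι ι ℂ)

lemma specRad_nonneg : 0 ≤ specRad M :=
  Real.sSup_nonneg (by rintro _ ⟨μ, -, rfl⟩; exact norm_nonneg μ)

lemma norm_le_specRad {μ : ℂ} (hμ : μ ∈ spectrum ℂ M) : ‖μ‖ ≤ specRad M :=
  le_csSup (M.finite_spectrum.image _).bddAbove ⟨μ, hμ, rfl⟩

lemma specRad_le {r : ℝ} (hr : 0 ≤ r) (h : ∀ μ ∈ spectrum ℂ M, ‖μ‖ ≤ r) : specRad M ≤ r :=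
  Real.sSup_le (by rintro _ ⟨μ, hμ, rfl⟩; exact h μ hμ) hr

lemma norm_trace_pow_le_card_mul_specRad_pow (n : ℕ) :
    ‖(M ^ n).trace‖ ≤ Fintype.card ι * specRad M ^ n := by
  obtain ⟨m, -, hm⟩ := M.exists_trace_pow_eq_sum_spectrum
  have hcard : ∑ μ ∈ M.finite_spectrum.toFinset, m μ = Fintype.card ι := by
    have := hm 0
    simp only [pow_zero, Matrix.trace_one, nsmul_eq_mul, mul_one] at this
    exact_mod_cast this.symm
  calc ‖(M ^ n).trace‖ ≤ ∑ μ ∈ M.finite_spectrum.toFinset, ‖m μ • μ ^ n‖ := by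
        rw [hm]; exact norm_sum_le _ _
    _ ≤ ∑ μ ∈ M.finite_spectrum.toFinset, m μ * specRad M ^ n :=
        Finset.sum_le_sum fun μ hμ => by
          rw [nsmul_eq_mul, norm_mul, norm_pow, Complex.norm_natCast]
          gcongr
          exact norm_le_specRad M (by simpa using hμ)
    _ = Fintype.card ι * specRad M ^ n := by rw [← Finset.sum_mul, ← hcard]; push_cast; rfl

lemma exists_norm_pow_le_of_norm_trace_pow_le {C : ℝ}
    (h : ∀ n, 1 ≤ n → ‖(M ^ n).trace‖ ≤ C) {μ : ℂ} (hμ : μ ∈ spectrum ℂ M) :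
    ∃ K, ∀ n, 1 ≤ n → ‖μ‖ ^ n ≤ K * C := by
  obtain ⟨m, hpos, hm⟩ := M.exists_trace_pow_eq_sum_spectrum
  obtain ⟨K, hK⟩ := exists_norm_mul_pow_le_of_norm_sum_le
    (M.finite_spectrum.mem_toFinset.mpr hμ) (fun μ => (m μ : ℂ)) (C := C)
    (by simpa [hm, nsmul_eq_mul] using h)
  refine ⟨K, fun n hn => le_trans ?_ (hK n hn)⟩
  rw [norm_mul, norm_pow, Complex.norm_natCast]
  exact le_mul_of_one_le_left (by positivity) (by exact_mod_cast hpos μ hμ)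

lemma specRad_le_one_of_norm_trace_pow_le {C : ℝ} (h : ∀ n, 1 ≤ n → ‖(M ^ n).trace‖ ≤ C) :
    specRad M ≤ 1 :=
  specRad_le M zero_le_one fun μ hμ => by
    obtain ⟨K, hK⟩ := exists_norm_pow_le_of_norm_trace_pow_le M h hμ
    exact le_of_eventually_pow_le_mul_pow zero_le_one
      (Filter.eventually_atTop.mpr ⟨1, fun n hn => by simpa using hK n hn⟩)

lemma specRad_eq_zero_of_trace_pow_eq_zero (h : ∀ n, 1 ≤ n → (M ^ n).trace = 0) :
    specRad M = 0 := by
  refine (specRad_le M le_rfl fun μ hμ => ?_).antisymm (specRad_nonneg M)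
  obtain ⟨K, hK⟩ := exists_norm_pow_le_of_norm_trace_pow_le M (C := 0)
    (fun n hn => by simp [h n hn]) hμ
  simpa using hK 1 le_rfl

end SpecRad

namespace Quiver.Path

variable {U : Type*} [Quiver U]

lemma getElem?_vertices_comp_length {a b c : U} (p : Path a b) (q : Path b c) :
    (p.comp q).vertices[p.length]? = some b := by
  simp [vertices_length]

lemma obj_eq_of_comp_eq_comp {a b b' c : U} {p : Path a b} {q : Path b c} {p' : Path a b'}
    {q' : Path b' c} (h : p.comp q = p'.comp q') (hl : p.length = p'.length) : b = b' := by
  have := getElem?_vertices_comp_length p q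
  rw [h, hl, getElem?_vertices_comp_length] at this
  exact (Option.some.inj this).symm

end Quiver.Path

section IndecomposableCycles

open Quiver

variable {U : Type} [Quiver.{1} U] {i : U}

lemma exists_eq_comp_isIndecCycle (p : Path i i) (hp : 0 < p.length) :
    ∃ y z : Path i i, IsIndecCycle U z ∧ p = y.comp z := by
  induction h : p.length using Nat.strong_induction_on generalizing p with
  | _ n ih =>
    by_cases hI : IsIndecCycle U p
    · exact ⟨.nil, p, hI, (Path.nil_comp p).symm⟩
    obtain ⟨q, r, hq, hr, rfl⟩ :
        ∃ q r : Path i i, 0 < q.length ∧ 0 < r.length ∧ p = q.comp r := by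
      simpa [IsIndecCycle, hp] using hI
    obtain ⟨y, z, hz, rfl⟩ := ih r.length (by rw [← h, Path.length_comp]; omega) r hr rfl
    exact ⟨q.comp y, z, hz, (Path.comp_assoc _ _ _).symm⟩

lemma eq_of_length_eq_of_subsingleton (hU : {c : Path i i | IsIndecCycle U c}.Subsingleton)
    {p q : Path i i} (hpq : p.length = q.length) : p = q := by
  induction h : p.length using Nat.strong_induction_on generalizing p q with
  | _ n ih =>
    rcases Nat.eq_zero_or_pos p.length with hp | hp
    · rw [Path.eq_nil_of_length_zero p hp, Path.eq_nil_of_length_zero q (hpq ▸ hp)]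
    obtain ⟨y, z, hz, rfl⟩ := exists_eq_comp_isIndecCycle p hp
    obtain ⟨y', z', hz', rfl⟩ := exists_eq_comp_isIndecCycle q (hpq ▸ hp)
    obtain rfl := hU hz hz'
    simp only [Path.length_comp] at hpq h
    rw [ih y.length (by have := hz.1; omega) (q := y') (by omega) rfl]

lemma comp_ne_comp_of_isIndecCycle {c c' : Path i i} (hc : 0 < c.length)
    (hc' : IsIndecCycle U c') (hlt : c.length < c'.length) : c.comp c' ≠ c'.comp c := by
  intro h
  -- comparing suffixes of length `c.length` in `h`: `c'` ends with `c`, and the vertex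
  -- before that suffix is `i`, so `c'` splits into two cycles
  obtain ⟨m, s, t, rfl, hs⟩ :=
    c'.exists_eq_comp_of_le_length (n := c'.length - c.length) (by omega)
  have ht : t.length = c.length := by rw [Path.length_comp] at hlt hs; omega
  rw [← Path.comp_assoc] at h
  obtain rfl := Path.obj_eq_of_comp_eq_comp h (by simp only [Path.length_comp]; omega)
  obtain ⟨-, rfl⟩ := (Path.comp_inj ht).mp h
  exact hc'.2 ⟨s, t, by rw [Path.length_comp] at hlt; omega, hc, rfl⟩

lemma exists_ne_of_length_eq_of_isIndecCycle {c c' : Path i i} (hc : IsIndecCycle U c)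
    (hc' : IsIndecCycle U c') (hne : c ≠ c') :
    ∃ d₁ d₂ : Path i i, d₁.length = d₂.length ∧ d₁ ≠ d₂ := by
  wlog hle : c.length ≤ c'.length generalizing c c'
  · exact this hc' hc hne.symm (by omega)
  rcases hle.lt_or_eq with hlt | heq
  · exact ⟨c.comp c', c'.comp c, by simp only [Path.length_comp]; omega,
      comp_ne_comp_of_isIndecCycle hc.1 hc' hlt⟩
  · exact ⟨c, c', heq, hne⟩

end IndecomposableCycles

namespace Quiver

universe u v

variable {U : Type u} [Quiver.{v + 1} U]

def Path.lengthSuccEquiv (n : ℕ) (a b : U) :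
    (Σ c, {q : Path a c // q.length = n} × (c ⟶ b)) ≃ {p : Path a b // p.length = n + 1} :=
  Equiv.ofBijective (fun x => ⟨x.2.1.1.cons x.2.2, by simp [x.2.1.2]⟩) <| by
    constructor
    · rintro ⟨c, ⟨q, hq⟩, e⟩ ⟨c', ⟨q', hq'⟩, e'⟩ h
      simp only [Subtype.mk.injEq] at h
      obtain rfl := Path.obj_eq_of_cons_eq_cons h
      obtain rfl := eq_of_heq (Path.heq_of_cons_eq_cons h)
      obtain rfl := eq_of_heq (Path.hom_heq_of_cons_eq_cons h)
      rfl
    · rintro ⟨_ | ⟨q, e⟩, hp⟩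
      · simp at hp
      · exact ⟨⟨_, ⟨q, by simpa using hp⟩, e⟩, rfl⟩

instance Path.finite_length_eq [Finite U] [∀ a b : U, Finite (a ⟶ b)] (n : ℕ) (a b : U) :
    Finite {p : Path a b // p.length = n} := by
  induction n generalizing b with
  | zero =>
    refine @Finite.of_subsingleton _ ⟨fun ⟨p, hp⟩ ⟨q, hq⟩ => ?_⟩
    obtain rfl := Path.eq_of_length_zero p hp
    simp [Path.eq_nil_of_length_zero p hp, Path.eq_nil_of_length_zero q hq]
  | succ n ih => exact Finite.of_equiv _ (Path.lengthSuccEquiv n a b)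

def numPaths (n : ℕ) (a b : U) : ℕ := Nat.card {p : Path a b // p.length = n}

lemma numPaths_zero (a b : U) : numPaths 0 a b = if a = b then 1 else 0 := by
  split_ifs with h
  · subst h
    refine Nat.card_eq_one_iff_exists.mpr ⟨⟨.nil, rfl⟩, fun ⟨p, hp⟩ => ?_⟩
    simp [Path.eq_nil_of_length_zero p hp]
  · exact Nat.card_eq_zero.mpr
      (Or.inl ⟨fun ⟨p, hp⟩ => h (Path.eq_of_length_zero p hp)⟩)

lemma numPaths_succ [Fintype U] [∀ a b : U, Finite (a ⟶ b)] (n : ℕ) (a b : U) :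
    numPaths (n + 1) a b = ∑ c, numPaths n a c * Nat.card (c ⟶ b) := by
  rw [numPaths, ← Nat.card_congr (Path.lengthSuccEquiv n a b), Nat.card_sigma]
  simp only [Nat.card_prod, numPaths]

lemma card_mul_numPaths_le [Finite U] [∀ a b : U, Finite (a ⟶ b)] {a b : U}
    {S : Set (Path b b)} {L : ℕ} (hS : ∀ d ∈ S, d.length = L) (n : ℕ) :
    Nat.card S * numPaths n a b ≤ numPaths (n + L) a b := by
  rw [numPaths, numPaths, ← Nat.card_prod]
  refine Nat.card_le_card_of_injective
    (fun x => ⟨x.2.1.comp x.1.1, by rw [Path.length_comp, x.2.2, hS _ x.1.2]⟩) ?_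
  rintro ⟨⟨d, hd⟩, ⟨p, hp⟩⟩ ⟨⟨d', hd'⟩, ⟨p', hp'⟩⟩ h
  obtain ⟨rfl, rfl⟩ := (Path.comp_inj (by rw [hS d hd, hS d' hd'])).mp (Subtype.mk.inj h)
  rfl

lemma card_pow_le_numPaths [Finite U] [∀ a b : U, Finite (a ⟶ b)] {b : U}
    {S : Set (Path b b)} {L : ℕ} (hS : ∀ d ∈ S, d.length = L) (k : ℕ) :
    Nat.card S ^ k ≤ numPaths (k * L) b b := by
  induction k with
  | zero => simp [numPaths_zero]
  | succ k ih =>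
    rw [pow_succ', add_one_mul]
    exact (Nat.mul_le_mul_left _ ih).trans (card_mul_numPaths_le hS _)

end Quiver

section CycleNumber

open Quiver

variable {U : Type} [Quiver.{1} U]

lemma numPaths_eq_zero_of_forall_not_isIndecCycle {i : U}
    (h : ∀ c : Path i i, ¬IsIndecCycle U c) {n : ℕ} (hn : 0 < n) : numPaths n i i = 0 :=
  Nat.card_eq_zero.mpr <| Or.inl ⟨fun ⟨p, hp⟩ =>
    have ⟨_, z, hz, _⟩ := exists_eq_comp_isIndecCycle p (hp ▸ hn)
    h z hz⟩

lemma numPaths_le_one_of_subsingleton {i : U}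
    (hU : {c : Path i i | IsIndecCycle U c}.Subsingleton) (n : ℕ) : numPaths n i i ≤ 1 :=
  have : Subsingleton {p : Path i i // p.length = n} :=
    ⟨fun p q => Subtype.ext (eq_of_length_eq_of_subsingleton hU (p.2.trans q.2.symm))⟩
  Finite.card_le_one_iff_subsingleton.mpr this

lemma cycleNumber_eq_zero_iff :
    cycleNumber U = 0 ↔ ∀ (i : U) (c : Path i i), ¬IsIndecCycle U c := by
  simp [cycleNumber, theta, Set.eq_empty_iff_forall_notMem]

lemma cycleNumber_le_one_iff :
    cycleNumber U ≤ 1 ↔ ∀ i : U, {c : Path i i | IsIndecCycle U c}.Subsingleton := by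
  simp [cycleNumber, theta, Set.encard_le_one_iff_subsingleton]

end CycleNumber

section Adjacency

open Quiver

variable {V}

lemma quivAdj_pow_apply (n : ℕ) (a b : V) : (quivAdj V ^ n) a b = numPaths n a b := by
  induction n generalizing b with
  | zero => simp [Matrix.one_apply, numPaths_zero]
  | succ n ih =>
    simp [pow_succ, Matrix.mul_apply, numPaths_succ, ih, quivAdj, Nat.card_eq_fintype_card]

lemma trace_quivAdj_pow (n : ℕ) : (quivAdj V ^ n).trace = ∑ a : V, (numPaths n a a : ℂ) := by
  simp [Matrix.trace, quivAdj_pow_apply]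

lemma fpdimQuiver_nonneg : 0 ≤ fpdimQuiver V := specRad_nonneg _

lemma sum_numPaths_le (n : ℕ) :
    (∑ a : V, numPaths n a a : ℝ) ≤ Fintype.card V * fpdimQuiver V ^ n := by
  have := norm_trace_pow_le_card_mul_specRad_pow (quivAdj V) n
  rw [trace_quivAdj_pow, ← Nat.cast_sum, Complex.norm_natCast] at this
  exact_mod_cast this

lemma card_le_fpdimQuiver_pow {a : V} {S : Set (Path a a)} {L : ℕ}
    (hS : ∀ d ∈ S, d.length = L) : (Nat.card S : ℝ) ≤ fpdimQuiver V ^ L := by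
  refine le_of_eventually_pow_le_mul_pow (N := Fintype.card V)
    (pow_nonneg fpdimQuiver_nonneg L) (Filter.Eventually.of_forall fun k => ?_)
  calc (Nat.card S : ℝ) ^ k ≤ numPaths (k * L) a a := by
        exact_mod_cast card_pow_le_numPaths hS k
    _ ≤ ∑ b : V, (numPaths (k * L) b b : ℝ) :=
        Finset.single_le_sum (f := fun b => (numPaths (k * L) b b : ℝ))
          (fun _ _ => Nat.cast_nonneg _) (Finset.mem_univ a)
    _ ≤ Fintype.card V * fpdimQuiver V ^ (k * L) := sum_numPaths_le _
    _ = Fintype.card V * (fpdimQuiver V ^ L) ^ k := by rw [mul_comm k L, pow_mul]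

lemma fpdimQuiver_eq_zero_of_cycleNumber_eq_zero (h : cycleNumber V = 0) :
    fpdimQuiver V = 0 :=
  specRad_eq_zero_of_trace_pow_eq_zero _ fun n hn => by
    rw [trace_quivAdj_pow]
    refine Finset.sum_eq_zero fun a _ => ?_
    rw [numPaths_eq_zero_of_forall_not_isIndecCycle (cycleNumber_eq_zero_iff.mp h a) hn,
      Nat.cast_zero]

lemma fpdimQuiver_le_one_of_cycleNumber_le_one (h : cycleNumber V ≤ 1) :
    fpdimQuiver V ≤ 1 :=
  specRad_le_one_of_norm_trace_pow_le _ (C := Fintype.card V) fun n _ => by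
    rw [trace_quivAdj_pow, ← Nat.cast_sum, Complex.norm_natCast, Nat.cast_le]
    calc ∑ a, numPaths n a a ≤ ∑ _a : V, 1 := Finset.sum_le_sum fun a _ =>
          numPaths_le_one_of_subsingleton (cycleNumber_le_one_iff.mp h a) n
      _ = Fintype.card V := by simp

lemma one_le_fpdimQuiver_of_cycleNumber_ne_zero (h : cycleNumber V ≠ 0) :
    1 ≤ fpdimQuiver V := by
  obtain ⟨a, c, hc⟩ : ∃ (a : V) (c : Path a a), IsIndecCycle V c := by
    simpa [cycleNumber_eq_zero_iff] using h
  have := card_le_fpdimQuiver_pow (S := {c}) fun d hd => congrArg Path.length hd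
  rwa [Nat.card_unique, Nat.cast_one,
    one_le_pow_iff_of_nonneg fpdimQuiver_nonneg hc.1.ne'] at this

lemma one_lt_fpdimQuiver_of_two_le_cycleNumber (h : 2 ≤ cycleNumber V) :
    1 < fpdimQuiver V := by
  have h1 : ¬cycleNumber V ≤ 1 := fun h1 => absurd (h.trans h1) (by norm_num)
  obtain ⟨a, ha⟩ := not_forall.mp (mt cycleNumber_le_one_iff.mpr h1)
  obtain ⟨c, hc, c', hc', hne⟩ := Set.not_subsingleton_iff.mp ha
  obtain ⟨d₁, d₂, hlen, hne⟩ := exists_ne_of_length_eq_of_isIndecCycle hc hc' hne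
  have := card_le_fpdimQuiver_pow (S := {d₁, d₂}) (L := d₁.length)
    (by rintro d (rfl | rfl) <;> simp [hlen])
  rw [Nat.card_coe_set_eq, Set.ncard_pair hne, Nat.cast_two] at this
  by_contra! hle
  linarith [pow_le_one₀ fpdimQuiver_nonneg hle (n := d₁.length)]

end Adjacency

lemma iff_of_trichotomy {x : ℕ∞} {y : ℝ} (h0 : x = 0 → y = 0) (h1 : x = 1 → y = 1)
    (h2 : 2 ≤ x → 1 < y) : (y = 0 ↔ x = 0) ∧ (y = 1 ↔ x = 1) ∧ (1 < y ↔ 2 ≤ x) := by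
  by_cases hx0 : x = 0
  · simp [hx0, h0 hx0]
  by_cases hx1 : x = 1
  · simp [hx1, h1 hx1]
  have hx : 2 ≤ x := by
    induction x using ENat.recTopCoe with
    | top => exact le_top
    | coe n => norm_cast at *; omega
  have hy := h2 hx
  simp [hx0, hx1, hx, hy, hy.ne', (zero_lt_one.trans hy).ne']

/-- Theorem 1.8: for a finite quiver `Q`,
(1) `fpdim Q = 0` iff `Θ(Q) = 0`;
(2) `fpdim Q = 1` iff `Θ(Q) = 1`;
(3) `fpdim Q > 1` iff `Θ(Q) ≥ 2`. -/
theorem fpdim_quiver_trichotomy :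
    (fpdimQuiver V = 0 ↔ cycleNumber V = 0) ∧
    (fpdimQuiver V = 1 ↔ cycleNumber V = 1) ∧
    (1 < fpdimQuiver V ↔ 2 ≤ cycleNumber V) :=
  iff_of_trichotomy fpdimQuiver_eq_zero_of_cycleNumber_eq_zero
    (fun h => (fpdimQuiver_le_one_of_cycleNumber_le_one h.le).antisymm
      (one_le_fpdimQuiver_of_cycleNumber_ne_zero (h ▸ one_ne_zero)))
    one_lt_fpdimQuiver_of_two_le_cycleNumber
end
end

section
/- Let C and D be k-linear categories with finite-dimensional Hom spaces, let F : C → D be a fully faithful k-linear functor, and let σ_C, σ_D be k-linear endofunctors of C and D respectively such that F∘σ_C is naturally isomorphic to σ_D∘F. Then for all integers n ≥ 1 and m ≥ 0, fpdim^n(σ_C^m) ≤ fpdim^n(σ_D^m); in particular, for every brick set φ = {X_1,…,X_n} in C, the set F(φ) = {F(X_1),…,F(X_n)} is a brick set in D and ρ(A(φ, σ_C^m)) ≤ ρ(A(F(φ), σ_D^m)). -/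
open CategoryTheory CategoryTheory.Limits Filter
open scoped ENNReal Classical

noncomputable section

variable (k : Type) [Field k]
section CatDefs

variable {C : Type*} [Category C] [Preadditive C] [CategoryTheory.Linear k C]

/-- A brick set: a finite family of objects with `dim Hom(X i, X j) = δ_{ij}`. -/
def IsBrickSet {n : ℕ} (φ : Fin n → C) : Prop :=
  ∀ i j, Module.finrank k (φ i ⟶ φ j) = if i = j then 1 else 0

/-- The adjacency matrix of a family of objects with respect to an endofunctor `σ`:
its `(i,j)` entry is `dim_k Hom(X i, σ (X j))`. -/
def adjMat (σ : C ⥤ C) {n : ℕ} (φ : Fin n → C) : Matrix (Fin n) (Fin n) ℂ :=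
  fun i j => (Module.finrank k (φ i ⟶ σ.obj (φ j)) : ℂ)

/-- The `n`-th Frobenius-Perron dimension of an endofunctor: the supremum of the spectral
radii of adjacency matrices of brick sets of size `n`. -/
def fpdimN (σ : C ⥤ C) (n : ℕ) : ℝ≥0∞ :=
  ⨆ (φ : Fin n → C) (_ : IsBrickSet k φ), ENNReal.ofReal (specRad (adjMat k σ φ))

/-- The Frobenius-Perron dimension of an endofunctor (testing against brick sets). -/
def fpdim (σ : C ⥤ C) : ℝ≥0∞ := ⨆ n : ℕ, fpdimN k σ (n + 1)

end CatDefs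

/-- The `m`-th power of an endofunctor. -/
def funPow {C : Type*} [Category C] (σ : C ⥤ C) : ℕ → (C ⥤ C)
  | 0 => 𝟭 C
  | m + 1 => funPow σ m ⋙ σ

/-!
A fully faithful linear functor identifies Hom spaces, and the intertwining isomorphism
`F ∘ σ_C ≅ σ_D ∘ F` iterates to `F ∘ σ_C^m ≅ σ_D^m ∘ F`. Hence `F` preserves every
`dim Hom(X, σ^m Y)`: brick sets go to brick sets with the same adjacency matrices, and the
supremum defining `fpdim^n(σ_D^m)` runs over a larger family.
-/

section

variable {C D : Type*} [Category C] [Category D]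

def funPowObjIso {F : C ⥤ D} {σC : C ⥤ C} {σD : D ⥤ D} (e : σC ⋙ F ≅ F ⋙ σD) :
    ∀ (m : ℕ) (X : C), F.obj ((funPow σC m).obj X) ≅ (funPow σD m).obj (F.obj X)
  | 0, _ => Iso.refl _
  | m + 1, X => e.app _ ≪≫ σD.mapIso (funPowObjIso e m X)

variable [Preadditive C] [CategoryTheory.Linear k C] [Preadditive D] [CategoryTheory.Linear k D]
  (F : C ⥤ D) [F.Full] [F.Faithful] [F.Additive] [F.Linear k]

def CategoryTheory.Functor.mapLinearEquiv (X Y : C) : (X ⟶ Y) ≃ₗ[k] (F.obj X ⟶ F.obj Y) :=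
  LinearEquiv.ofBijective (F.mapLinearMap k) ⟨F.map_injective, F.map_surjective⟩

theorem CategoryTheory.Functor.finrank_map_hom (X Y : C) :
    Module.finrank k (F.obj X ⟶ F.obj Y) = Module.finrank k (X ⟶ Y) :=
  (F.mapLinearEquiv k X Y).finrank_eq.symm

theorem IsBrickSet.map {n : ℕ} {φ : Fin n → C} (hφ : IsBrickSet k φ) :
    IsBrickSet k (fun i => F.obj (φ i)) := fun i j => by
  rw [F.finrank_map_hom k, hφ i j]

variable {F} {σC : C ⥤ C} {σD : D ⥤ D}

theorem finrank_hom_funPow_map (e : σC ⋙ F ≅ F ⋙ σD) (m : ℕ) (X Y : C) :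
    Module.finrank k (F.obj X ⟶ (funPow σD m).obj (F.obj Y)) =
      Module.finrank k (X ⟶ (funPow σC m).obj Y) := by
  rw [← F.finrank_map_hom k X ((funPow σC m).obj Y)]
  exact (Linear.homCongr k (Iso.refl _) (funPowObjIso e m Y)).finrank_eq.symm

theorem adjMat_funPow_map (e : σC ⋙ F ≅ F ⋙ σD) (m : ℕ) {n : ℕ} (φ : Fin n → C) :
    adjMat k (funPow σD m) (fun i => F.obj (φ i)) = adjMat k (funPow σC m) φ := by
  ext i j
  simp only [adjMat, finrank_hom_funPow_map k e]

theorem fpdimN_funPow_le (e : σC ⋙ F ≅ F ⋙ σD) (m n : ℕ) :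
    fpdimN k (funPow σC m) n ≤ fpdimN k (funPow σD m) n :=
  iSup₂_le fun φ hφ => le_iSup₂_of_le (fun i => F.obj (φ i)) (hφ.map k F) <| by
    rw [adjMat_funPow_map k e]

end

/-- Theorem 0.1 / 3.2: if `F : C → D` is a fully faithful `k`-linear functor between
`k`-linear Hom-finite categories, and `σ_C`, `σ_D` are `k`-linear endofunctors with
`F ∘ σ_C ≅ σ_D ∘ F`, then `fpdim^n(σ_C^m) ≤ fpdim^n(σ_D^m)` for all `n ≥ 1`, `m ≥ 0`;
moreover `F` carries brick sets to brick sets, and the corresponding spectral radii of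
adjacency matrices only increase. -/
theorem fp_embedding
    {C : Type*} [Category C] [Preadditive C] [CategoryTheory.Linear k C]
    [∀ X Y : C, FiniteDimensional k (X ⟶ Y)]
    {D : Type*} [Category D] [Preadditive D] [CategoryTheory.Linear k D]
    [∀ X Y : D, FiniteDimensional k (X ⟶ Y)]
    (F : C ⥤ D) [F.Full] [F.Faithful] [F.Additive] [F.Linear k]
    (σC : C ⥤ C) [σC.Additive] [σC.Linear k]
    (σD : D ⥤ D) [σD.Additive] [σD.Linear k]
    (e : σC ⋙ F ≅ F ⋙ σD) :
    (∀ (n m : ℕ), fpdimN k (funPow σC m) (n + 1) ≤ fpdimN k (funPow σD m) (n + 1)) ∧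
    (∀ (n : ℕ) (φ : Fin n → C), IsBrickSet k φ →
      IsBrickSet k (fun i => F.obj (φ i)) ∧
      ∀ m : ℕ, specRad (adjMat k (funPow σC m) φ) ≤
        specRad (adjMat k (funPow σD m) (fun i => F.obj (φ i)))) :=
  ⟨fun n m => fpdimN_funPow_le k e m (n + 1),
    fun _ _ hφ => ⟨hφ.map k F, fun m => (congrArg specRad (adjMat_funPow_map k e m _)).ge⟩⟩
end
end

section
/- Let T be a pretriangulated k-linear category with finite-dimensional Hom spaces and suspension Σ. Then fpc(T) ≤ cx(T), where fpc(T) = fpg(Σ) + 1 is the Frobenius–Perron complexity and cx(T) = inf{ d : for all objects X, Y of T, dim_k Hom_T(X, Σ^n(Y))/n^{d-1} → 0 as n → ∞ } is the complexity of T. -/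
open CategoryTheory CategoryTheory.Limits Filter
open scoped ENNReal Classical

noncomputable section

variable (k : Type) [Field k]
section TriDefs

variable {C : Type*} [Category C] [Preadditive C] [CategoryTheory.Linear k C] [HasShift C ℤ]

/-- An atomic set in a category with shift: a brick set of objects `X` that moreover satisfy
`Hom(X, X⟦m⟧) = 0` for all `m < 0`. -/
def IsAtomicSet {n : ℕ} (φ : Fin n → C) : Prop :=
  IsBrickSet k φ ∧
    ∀ i (m : ℤ), m < 0 → Subsingleton (φ i ⟶ (shiftFunctor C m).obj (φ i))

/-- An atomic object: a brick `X` with `Hom(X, X⟦m⟧) = 0` for all `m < 0`. -/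
def IsAtomicObj (X : C) : Prop :=
  Module.finrank k (X ⟶ X) = 1 ∧
    ∀ m : ℤ, m < 0 → Subsingleton (X ⟶ (shiftFunctor C m).obj X)

/-- The `n`-th Frobenius-Perron dimension of an endofunctor of a category with shift,
testing against atomic sets whose members satisfy the predicate `P`. -/
def fpdimTN (P : C → Prop) (σ : C ⥤ C) (n : ℕ) : ℝ≥0∞ :=
  ⨆ (φ : Fin n → C) (_ : (∀ i, P (φ i)) ∧ IsAtomicSet k φ),
    ENNReal.ofReal (specRad (adjMat k σ φ))

/-- The Frobenius-Perron dimension of an endofunctor of a category with shift,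
testing against atomic sets whose members satisfy the predicate `P`. -/
def fpdimT (P : C → Prop) (σ : C ⥤ C) : ℝ≥0∞ := ⨆ n : ℕ, fpdimTN k P σ (n + 1)

/-- `log_m r`, with the convention that `log_m 0 = -∞`. -/
def logn (r : ℝ) (m : ℕ) : EReal :=
  if r = 0 then ⊥ else ((Real.log r / Real.log m : ℝ) : EReal)

/-- The Frobenius-Perron growth: the supremum over atomic sets `φ` (with members
satisfying `P`) of `limsup_m log_m ρ(A(φ, Σ^m))`. -/
def fpg (P : C → Prop) : EReal :=
  ⨆ (n : ℕ) (φ : Fin (n + 1) → C) (_ : (∀ i, P (φ i)) ∧ IsAtomicSet k φ),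
    limsup (fun m : ℕ => logn (specRad (adjMat k (shiftFunctor C (m : ℤ)) φ)) m) atTop

/-- The Frobenius-Perron curvature: the supremum over atomic sets `φ` (with members
satisfying `P`) of `limsup_m ρ(A(φ, Σ^m))^{1/m}`. -/
def fpv (P : C → Prop) : ℝ≥0∞ :=
  ⨆ (n : ℕ) (φ : Fin (n + 1) → C) (_ : (∀ i, P (φ i)) ∧ IsAtomicSet k φ),
    limsup (fun m : ℕ =>
      ENNReal.ofReal (specRad (adjMat k (shiftFunctor C (m : ℤ)) φ) ^ ((m : ℝ)⁻¹))) atTop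

/-- The Frobenius-Perron global dimension: `sup { n : ℤ | fpdim (Σ^n) ≠ 0 }`. -/
def fpgldim (P : C → Prop) : EReal :=
  sSup ((fun n : ℤ => ((n : ℝ) : EReal)) '' {n : ℤ | fpdimT k P (shiftFunctor C n) ≠ 0})

end TriDefs

section Complexity

variable (T : Type*) [Category T] [Preadditive T] [CategoryTheory.Linear k T]
  [HasShift T ℤ]

/-- The complexity of a category with shift:
`cx(T) = inf { d : ∀ X Y, dim_k Hom(X, Σ^n Y) / n^{d-1} → 0 }` (as an extended real,
with `inf ∅ = +∞`). -/
def cxT : EReal :=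
  sInf ((fun d : ℝ => (d : EReal)) ''
    {d : ℝ | ∀ X Y : T, Tendsto
      (fun n : ℕ => (Module.finrank k (X ⟶ (shiftFunctor T (n : ℤ)).obj Y) : ℝ) /
        (n : ℝ) ^ (d - 1)) atTop (nhds 0)})

end Complexity

/-! If `d` is admissible for `cx(T)`, then eventually `dim Hom(X i, Σ^m X j) ≤ m^(d-1)` for all
members of an atomic set `φ`. The spectral radius of `A(φ, Σ^m)` is bounded by its `ℓ∞` operator
norm, hence by `|φ| m^(d-1)`, so `log_m ρ(A(φ, Σ^m)) ≤ log |φ| / log m + (d - 1) → d - 1`.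
Thus `fpg(Σ) ≤ d - 1`. -/

attribute [local instance] Matrix.linftyOpNormedRing Matrix.linftyOpNormedAlgebra

lemma specRad_nonneg_s17 {ι : Type*} [Fintype ι] [DecidableEq ι] (M : Matrix ι ι ℂ) :
    0 ≤ specRad M :=
  Real.sSup_nonneg (by rintro _ ⟨z, _, rfl⟩; exact norm_nonneg z)

lemma specRad_le_card_mul {ι : Type*} [Fintype ι] [DecidableEq ι] [Nonempty ι]
    (M : Matrix ι ι ℂ) {c : ℝ} (h : ∀ i j, ‖M i j‖ ≤ c) :
    specRad M ≤ Fintype.card ι * c := by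
  have hc : 0 ≤ c := (norm_nonneg _).trans (h (Classical.arbitrary ι) (Classical.arbitrary ι))
  have hnorm : ‖M‖₊ ≤ Fintype.card ι * c.toNNReal := by
    rw [Matrix.linfty_opNNNorm_def]
    refine Finset.sup_le fun i _ => ?_
    calc ∑ j, ‖M i j‖₊ ≤ ∑ _j : ι, c.toNNReal :=
          Finset.sum_le_sum fun j _ => (Real.le_toNNReal_iff_coe_le hc).mpr (h i j)
      _ = Fintype.card ι * c.toNNReal := by
          rw [Finset.sum_const, Finset.card_univ, nsmul_eq_mul]
  replace hnorm : ‖M‖ ≤ Fintype.card ι * c := by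
    simpa [Real.coe_toNNReal _ hc] using NNReal.coe_le_coe.mpr hnorm
  have : CompleteSpace (Matrix ι ι ℂ) := FiniteDimensional.complete ℂ _
  refine Real.sSup_le ?_ (by positivity)
  rintro _ ⟨z, hz, rfl⟩
  exact (spectrum.norm_le_norm_of_mem hz).trans hnorm

lemma logn_le_of_le_mul_rpow {r a e : ℝ} {m : ℕ} (hr : 0 ≤ r) (ha : 0 < a) (hm : 1 < m)
    (h : r ≤ a * (m : ℝ) ^ e) :
    logn r m ≤ ((Real.log a / Real.log m + e : ℝ) : EReal) := by
  unfold logn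
  split_ifs with hr0
  · exact bot_le
  have hlogm : 0 < Real.log m := Real.log_pos (mod_cast hm)
  have hlog : Real.log r ≤ Real.log a + e * Real.log m := by
    calc Real.log r ≤ Real.log (a * (m : ℝ) ^ e) :=
          Real.log_le_log (lt_of_le_of_ne hr (Ne.symm hr0)) h
      _ = Real.log a + e * Real.log m := by
          rw [Real.log_mul ha.ne' (by positivity), Real.log_rpow (by positivity)]
  refine EReal.coe_le_coe_iff.mpr ?_
  rw [div_add' _ _ _ hlogm.ne']
  exact div_le_div_of_nonneg_right hlog hlogm.le

lemma tendsto_log_div_log_add (a e : ℝ) :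
    Tendsto (fun m : ℕ => ((Real.log a / Real.log m + e : ℝ) : EReal)) atTop
      (nhds (e : EReal)) := by
  have hlog : Tendsto (fun m : ℕ => Real.log m) atTop atTop :=
    Real.tendsto_log_atTop.comp tendsto_natCast_atTop_atTop
  have : Tendsto (fun m : ℕ => Real.log a / Real.log m + e) atTop (nhds (0 + e)) := by
    simpa [div_eq_mul_inv] using (hlog.inv_tendsto_atTop.const_mul (Real.log a)).add_const e
  rw [zero_add] at this
  exact (continuous_coe_real_ereal.tendsto e).comp this

lemma limsup_logn_specRad_le {ι : Type*} [Fintype ι] [DecidableEq ι] [Nonempty ι]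
    (M : ℕ → Matrix ι ι ℂ) {e : ℝ} (h : ∀ᶠ m : ℕ in atTop, ∀ i j, ‖M m i j‖ ≤ (m : ℝ) ^ e) :
    limsup (fun m : ℕ => logn (specRad (M m)) m) atTop ≤ (e : EReal) := by
  refine (limsup_le_limsup ?_).trans_eq (tendsto_log_div_log_add (Fintype.card ι) e).limsup_eq
  filter_upwards [h, eventually_gt_atTop 1] with m hm hm1
  exact logn_le_of_le_mul_rpow (specRad_nonneg_s17 _) (mod_cast Fintype.card_pos) hm1
    (specRad_le_card_mul _ hm)

lemma eventually_le_of_tendsto_div_nhds_zero {α : Type*} {l : Filter α} {f g : α → ℝ}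
    (hg : ∀ᶠ x in l, 0 < g x) (h : Tendsto (fun x => f x / g x) l (nhds 0)) :
    ∀ᶠ x in l, f x ≤ g x := by
  filter_upwards [hg, h.eventually_lt_const one_pos] with x hgx hx
  exact ((div_lt_one hgx).mp hx).le

lemma fpg_le_of_tendsto {C : Type*} [Category C] [Preadditive C]
    [CategoryTheory.Linear k C] [HasShift C ℤ] (P : C → Prop) {e : ℝ}
    (h : ∀ X Y : C, Tendsto (fun m : ℕ =>
      (Module.finrank k (X ⟶ (shiftFunctor C (m : ℤ)).obj Y) : ℝ) / (m : ℝ) ^ e)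
        atTop (nhds 0)) :
    fpg k P ≤ (e : EReal) := by
  refine iSup_le fun n => iSup₂_le fun φ _ => limsup_logn_specRad_le _ ?_
  have hpow : ∀ᶠ m : ℕ in atTop, (0 : ℝ) < (m : ℝ) ^ e :=
    (eventually_gt_atTop 0).mono fun m hm => Real.rpow_pos_of_pos (mod_cast hm) e
  simp only [eventually_all, adjMat, Complex.norm_natCast]
  exact fun i j => eventually_le_of_tendsto_div_nhds_zero hpow (h (φ i) (φ j))

/-- Theorem 0.5 / 8.3: for a pretriangulated `k`-linear Hom-finite category `T`,
the Frobenius-Perron complexity `fpc(T) = fpg(Σ) + 1` is at most the complexity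
`cx(T)`. -/
theorem fpc_le_cx
    (T : Type*) [Category T] [Preadditive T] [CategoryTheory.Linear k T]
    [HasZeroObject T] [HasShift T ℤ] [∀ n : ℤ, (shiftFunctor T n).Additive]
    [Pretriangulated T] [∀ X Y : T, FiniteDimensional k (X ⟶ Y)] :
    fpg k (fun _ : T => True) + 1 ≤ cxT k T := by
  refine le_sInf ?_
  rintro _ ⟨d, hd, rfl⟩
  calc fpg k (fun _ : T => True) + 1 ≤ ((d - 1 : ℝ) : EReal) + ((1 : ℝ) : EReal) :=
        add_le_add_left (fpg_le_of_tendsto k _ hd) 1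
    _ = (d : EReal) := by rw [← EReal.coe_add, sub_add_cancel]
end
end
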